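/- For an n×n complex matrix T = (t_{ij}) with all entries t_{ij} ≥ 0, the numerical radius satisfies w(T) = (1/2) r((t_{ij} + t_{ji})), the spectral radius of the symmetrized matrix. -/

import Mathlib

/-!
Write `A` for `T` acting on `ℂⁿ`. The triangle inequality and `w(A*) = w(A)` give
`w(A + A*) ≤ 2 w(A)`. Conversely, since the entries of `T` are nonnegative,
`|⟨Ax, x⟩| ≤ ⟨A|x|, |x|⟩ = ½ ⟨(A + A*)|x|, |x|⟩ ≤ ½ w(A + A*)`, where `|x|` is the entrywise
modulus of `x`. Finally `A + A*` is self-adjoint, and for a self-adjoint operator on a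
finite-dimensional space every spectral value is an eigenvalue of modulus at most the numerical
radius, so `w(A + A*) = ‖A + A*‖ = r(A + A*)`.
-/

open scoped ComplexOrder

/-- The numerical radius of an operator on a complex Hilbert space. -/
noncomputable def nr {H : Type*} [NormedAddCommGroup H] [InnerProductSpace ℂ H]
    (T : H →L[ℂ] H) : ℝ :=
  sSup {r : ℝ | ∃ x : H, ‖x‖ = 1 ∧ r = ‖(inner ℂ (T x) x : ℂ)‖}

open ComplexConjugate ContinuousLinearMap

section NumericalRadius

variable {H : Type*} [NormedAddCommGroup H] [InnerProductSpace ℂ H]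

lemma norm_inner_apply_self_le_opNorm (T : H →L[ℂ] H) {x : H} (hx : ‖x‖ = 1) :
    ‖inner ℂ (T x) x‖ ≤ ‖T‖ :=
  calc ‖inner ℂ (T x) x‖ ≤ ‖T x‖ * ‖x‖ := norm_inner_le_norm _ _
    _ ≤ ‖T‖ * ‖x‖ * ‖x‖ := by gcongr; exact T.le_opNorm x
    _ = ‖T‖ := by rw [hx, mul_one, mul_one]

lemma norm_inner_apply_self_le_nr (T : H →L[ℂ] H) {x : H} (hx : ‖x‖ = 1) :
    ‖inner ℂ (T x) x‖ ≤ nr T :=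
  le_csSup ⟨‖T‖, by rintro r ⟨y, hy, rfl⟩; exact norm_inner_apply_self_le_opNorm T hy⟩ ⟨x, hx, rfl⟩

lemma nr_le {T : H →L[ℂ] H} {c : ℝ} (hc : 0 ≤ c)
    (h : ∀ x : H, ‖x‖ = 1 → ‖inner ℂ (T x) x‖ ≤ c) : nr T ≤ c :=
  Real.sSup_le (by rintro r ⟨x, hx, rfl⟩; exact h x hx) hc

lemma nr_nonneg (T : H →L[ℂ] H) : 0 ≤ nr T :=
  Real.sSup_nonneg (by rintro r ⟨x, -, rfl⟩; positivity)

lemma nr_le_norm (T : H →L[ℂ] H) : nr T ≤ ‖T‖ :=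
  nr_le (norm_nonneg T) fun _ hx => norm_inner_apply_self_le_opNorm T hx

lemma nr_add_le (S T : H →L[ℂ] H) : nr (S + T) ≤ nr S + nr T :=
  nr_le (add_nonneg (nr_nonneg S) (nr_nonneg T)) fun x hx => by
    rw [add_apply, inner_add_left]
    exact (norm_add_le _ _).trans
      (add_le_add (norm_inner_apply_self_le_nr S hx) (norm_inner_apply_self_le_nr T hx))

lemma norm_le_nr_of_hasEigenvalue {T : H →L[ℂ] H} {μ : ℂ}
    (hμ : Module.End.HasEigenvalue (T : H →ₗ[ℂ] H) μ) : ‖μ‖ ≤ nr T := by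
  obtain ⟨v, hv⟩ := hμ.exists_hasEigenvector
  set x : H := (‖v‖⁻¹ : ℂ) • v
  have hx : ‖x‖ = 1 := norm_smul_inv_norm hv.2
  have hTx : T x = μ • x := by
    rw [map_smul, show T v = μ • v from hv.apply_eq_smul, smul_comm]
  have := norm_inner_apply_self_le_nr T hx
  rwa [hTx, inner_smul_left, inner_self_eq_norm_sq_to_K, hx, norm_mul, RCLike.norm_conj,
    RCLike.ofReal_one, one_pow, norm_one, mul_one] at this

variable [CompleteSpace H]

lemma nr_star (T : H →L[ℂ] H) : nr (star T) = nr T := by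
  have key : ∀ x, inner ℂ (star T x) x = conj (inner ℂ (T x) x) := fun x => by
    rw [star_eq_adjoint, adjoint_inner_left, inner_conj_symm]
  simp only [nr, key, RCLike.norm_conj]

lemma inner_add_star_apply_self (T : H →L[ℂ] H) (x : H) :
    inner ℂ ((T + star T) x) x = ((2 * (inner ℂ (T x) x).re : ℝ) : ℂ) := by
  rw [add_apply, inner_add_left, star_eq_adjoint, adjoint_inner_left, ← inner_conj_symm x (T x),
    Complex.add_conj]

lemma two_mul_re_inner_le_nr_add_star (T : H →L[ℂ] H) {x : H} (hx : ‖x‖ = 1) :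
    2 * (inner ℂ (T x) x).re ≤ nr (T + star T) := by
  have := norm_inner_apply_self_le_nr (T + star T) hx
  rw [inner_add_star_apply_self, Complex.norm_real, Real.norm_eq_abs] at this
  exact (le_abs_self _).trans this

lemma nr_add_star_le (T : H →L[ℂ] H) : nr (T + star T) ≤ 2 * nr T := by
  linarith [nr_add_le T (star T), nr_star T]

lemma spectralRadius_le_nr [FiniteDimensional ℂ H] (T : H →L[ℂ] H) :
    spectralRadius ℂ T ≤ ENNReal.ofReal (nr T) := by
  refine iSup₂_le fun μ hμ => ?_
  rw [spectrum_eq, ← Module.End.hasEigenvalue_iff_mem_spectrum] at hμ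
  rw [← enorm_eq_nnnorm, ← ofReal_norm]
  exact ENNReal.ofReal_le_ofReal (norm_le_nr_of_hasEigenvalue hμ)

lemma IsSelfAdjoint.nr_eq_norm [FiniteDimensional ℂ H] {T : H →L[ℂ] H} (hT : IsSelfAdjoint T) :
    nr T = ‖T‖ := by
  refine (nr_le_norm T).antisymm ?_
  have := (spectralRadius_le_nr T)
  rwa [hT.spectralRadius_eq_nnnorm, ← enorm_eq_nnnorm, ← ofReal_norm,
    ENNReal.ofReal_le_ofReal_iff (nr_nonneg T)] at this

end NumericalRadius

noncomputable def entrywiseNorm {ι : Type*} (x : EuclideanSpace ℂ ι) : EuclideanSpace ℂ ι :=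
  WithLp.toLp 2 fun i => (‖x i‖ : ℂ)

lemma norm_entrywiseNorm {ι : Type*} [Fintype ι] (x : EuclideanSpace ℂ ι) :
    ‖entrywiseNorm x‖ = ‖x‖ := by
  simp [EuclideanSpace.norm_eq, entrywiseNorm]

namespace Matrix

lemma of_add_apply_swap_eq_add_star {ι : Type*} {T : Matrix ι ι ℂ} (hT : ∀ i j, 0 ≤ T i j) :
    (of fun i j => T i j + T j i) = T + star T := by
  ext i j
  rw [of_apply, add_apply, star_apply, (IsSelfAdjoint.of_nonneg (hT j i)).star_eq]

variable {ι : Type*} [Fintype ι] [DecidableEq ι]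

lemma inner_toEuclideanCLM_apply_self (T : Matrix ι ι ℂ) (x : EuclideanSpace ℂ ι) :
    inner ℂ (toEuclideanCLM (𝕜 := ℂ) T x) x = ∑ i, ∑ j, conj (T i j) * conj (x j) * x i := by
  simp only [EuclideanSpace.inner_eq_star_dotProduct, dotProduct, ofLp_toEuclideanCLM,
    Pi.star_apply, mulVec, star_sum, star_mul', RCLike.star_def, Finset.mul_sum]
  exact Finset.sum_congr rfl fun i _ => Finset.sum_congr rfl fun j _ => by ring

lemma norm_inner_toEuclideanCLM_apply_self_le (T : Matrix ι ι ℂ) (hT : ∀ i j, 0 ≤ T i j)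
    (x : EuclideanSpace ℂ ι) :
    ‖inner ℂ (toEuclideanCLM (𝕜 := ℂ) T x) x‖ ≤
      (inner ℂ (toEuclideanCLM (𝕜 := ℂ) T (entrywiseNorm x)) (entrywiseNorm x)).re := by
  have hconj : ∀ i j, conj (T i j) = (‖T i j‖ : ℂ) := fun i j => by
    rw [(IsSelfAdjoint.of_nonneg (hT i j)).conj_eq, Complex.norm_of_nonneg' (hT i j)]
  simp only [inner_toEuclideanCLM_apply_self, hconj, Complex.re_sum]
  calc _ ≤ ∑ i, ∑ j, ‖(‖T i j‖ : ℂ) * conj (x j) * x i‖ := by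
        refine (norm_sum_le _ _).trans (Finset.sum_le_sum fun i _ => norm_sum_le _ _)
    _ = _ := by simp [entrywiseNorm]

lemma two_mul_nr_toEuclideanCLM_le (T : Matrix ι ι ℂ) (hT : ∀ i j, 0 ≤ T i j) :
    2 * nr (toEuclideanCLM (𝕜 := ℂ) T) ≤
      nr (toEuclideanCLM (𝕜 := ℂ) T + star (toEuclideanCLM (𝕜 := ℂ) T)) := by
  set A := toEuclideanCLM (𝕜 := ℂ) T
  refine (le_div_iff₀' two_pos).1 (nr_le (div_nonneg (nr_nonneg _) zero_le_two) fun x hx => ?_)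
  have hy : ‖entrywiseNorm x‖ = 1 := (norm_entrywiseNorm x).trans hx
  calc ‖inner ℂ (A x) x‖ ≤ (inner ℂ (A (entrywiseNorm x)) (entrywiseNorm x)).re :=
        norm_inner_toEuclideanCLM_apply_self_le T hT x
    _ ≤ nr (A + star A) / 2 := by linarith [two_mul_re_inner_le_nr_add_star A hy]

end Matrix

/-- For an `n × n` complex matrix with (real) nonnegative entries, the numerical radius
equals half the spectral radius of the symmetrized matrix. -/
theorem nr_eq_half_spectralRadius_symmetrized (n : ℕ) (T : Matrix (Fin n) (Fin n) ℂ)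
    (hT : ∀ i j, 0 ≤ T i j) :
    nr (Matrix.toEuclideanCLM (𝕜 := ℂ) T) =
      (1/2) * (spectralRadius ℂ (Matrix.toEuclideanCLM (𝕜 := ℂ)
        (Matrix.of fun i j => T i j + T j i))).toReal := by
  set A := Matrix.toEuclideanCLM (𝕜 := ℂ) T
  have hB : IsSelfAdjoint (A + star A) := .add_star_self A
  rw [Matrix.of_add_apply_swap_eq_add_star hT, map_add, map_star, hB.spectralRadius_eq_nnnorm,
    ENNReal.coe_toReal, coe_nnnorm, ← hB.nr_eq_norm]
  linarith [nr_add_star_le A, Matrix.two_mul_nr_toEuclideanCLM_le T hT]
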